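/- In Γ_Δ(D), if (u,v) is an arc then v is uniquely determined by u and the first letter of v; consequently, for any vertex u the map sending each out-neighbor of u to its first letter is a bijection from the out-neighborhood of u onto {1,…,Δ+1} \ {u_1}, and Γ_Δ(D) is Δ-regular. -/

import Mathlib

/-- `l` is a vertex of the cycle prefix digraph `Γ_Δ(D)`: a sequence of `D`
distinct letters from the alphabet `{1, …, Δ+1}`. -/
def IsVtx (Δ D : ℕ) (l : List ℕ) : Prop :=
  l.length = D ∧ l.Nodup ∧ ∀ x ∈ l, 1 ≤ x ∧ x ≤ Δ + 1

/-- Adjacency in `Γ_Δ(D, -r)` (for `r = 0` this is `Γ_Δ(D)` itself): arcs are the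
rotations `R_k` for `r+2 ≤ k ≤ D` (0-indexed: move the letter at index `j`,
`r+1 ≤ j ≤ D-1`, to the front) and the shifts `S_y` for letters `y` not in the
sequence. -/
def adjR (Δ D r : ℕ) (X Y : List ℕ) : Prop :=
  IsVtx Δ D X ∧ IsVtx Δ D Y ∧
    ((∃ j, r + 1 ≤ j ∧ j < D ∧ Y = X.getD j 0 :: X.eraseIdx j) ∨
     (∃ y, y ∉ X ∧ Y = y :: X.dropLast))

/-- `w` is a directed walk of length `n` from `u` to `v` in the digraph with
adjacency relation `A`. -/
def IsWalk {V : Type*} (A : V → V → Prop) (u v : V) (n : ℕ) (w : ℕ → V) : Prop :=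
  w 0 = u ∧ w n = v ∧ ∀ i < n, A (w i) (w (i + 1))

/-- Directed distance: the least length of a directed walk from `u` to `v`. -/
noncomputable def cpDist {V : Type*} (A : V → V → Prop) (u v : V) : ℕ :=
  sInf {n | ∃ w, IsWalk A u v n w}

/-!
A rotation of `u` brings a letter of `u` other than `u₁` to the front, while a shift brings a
letter outside `u` to the front. As the letters of `u` are distinct, the new first letter
determines which rotation or shift was applied. Conversely each letter `z ≠ u₁` of the
alphabet is reached, by the rotation moving `z` forward if `z ∈ u` and by `S_z` otherwise; so
the out-neighbours of `u` correspond to the `Δ` letters of `{1, …, Δ+1} \ {u₁}`.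
-/

namespace IsVtx

variable {Δ D : ℕ} {u v : List ℕ}

theorem of_perm (hu : IsVtx Δ D u) (h : u.Perm v) : IsVtx Δ D v :=
  ⟨h.length_eq ▸ hu.1, h.nodup_iff.1 hu.2.1, fun x hx => hu.2.2 x (h.mem_iff.2 hx)⟩

theorem rotate (hu : IsVtx Δ D u) {j : ℕ} (hj : j < u.length) :
    IsVtx Δ D (u[j] :: u.eraseIdx j) :=
  hu.of_perm (List.getElem_cons_eraseIdx_perm hj).symm

theorem shift (hu : IsVtx Δ D u) (hD : 1 ≤ D) {y : ℕ} (hy : y ∉ u) (hy₁ : 1 ≤ y)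
    (hyΔ : y ≤ Δ + 1) : IsVtx Δ D (y :: u.dropLast) := by
  have hsub := u.dropLast_sublist
  refine ⟨?_, List.nodup_cons.2 ⟨fun h => hy (hsub.mem h), hu.2.1.sublist hsub⟩, ?_⟩
  · simp only [List.length_cons, List.length_dropLast, hu.1]
    omega
  · intro x hx
    rcases List.mem_cons.1 hx with rfl | hx
    · exact ⟨hy₁, hyΔ⟩
    · exact hu.2.2 x (hsub.mem hx)

theorem headI_mem_alphabet (hv : IsVtx Δ D v) (hD : 1 ≤ D) :
    v.headI ∈ Finset.Icc 1 (Δ + 1) := by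
  obtain ⟨a, t, rfl⟩ := List.exists_cons_of_length_pos (hv.1 ▸ hD)
  exact Finset.mem_Icc.2 (hv.2.2 a List.mem_cons_self)

end IsVtx

section OutNeighbors

variable {Δ D : ℕ} {u : List ℕ}

theorem adjR_headI_injOn (r : ℕ) : Set.InjOn List.headI {v | adjR Δ D r u v} := by
  rintro v ⟨hu, -, hv⟩ w ⟨-, -, hw⟩ hvw
  have getD_eq {j : ℕ} (hj : j < D) : u.getD j 0 = u[j]'(hu.1 ▸ hj) :=
    List.getD_eq_getElem _ _ _
  rcases hv with ⟨j, -, hj, rfl⟩ | ⟨y, hy, rfl⟩ <;>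
    rcases hw with ⟨k, -, hk, rfl⟩ | ⟨z, hz, rfl⟩ <;>
    simp only [List.headI_cons] at hvw
  · rw [getD_eq hj, getD_eq hk, hu.2.1.getElem_inj_iff] at hvw
    subst hvw; rfl
  · exact absurd (hvw ▸ getD_eq hj ▸ List.getElem_mem _) hz
  · exact absurd (hvw ▸ getD_eq hk ▸ List.getElem_mem _) hy
  · rw [hvw]

theorem adjR_headI_mem {r : ℕ} {v : List ℕ} (h : adjR Δ D r u v) :
    v.headI ∈ (Finset.Icc 1 (Δ + 1)).erase u.headI := by
  obtain ⟨hu, hv, hadj⟩ := h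
  have hD : 1 ≤ D := by
    rcases hadj with ⟨_, _, _, rfl⟩ | ⟨_, _, rfl⟩ <;> simp [← hv.1]
  refine Finset.mem_erase.2 ⟨?_, hv.headI_mem_alphabet hD⟩
  obtain ⟨a, t, rfl⟩ := List.exists_cons_of_length_pos (hu.1 ▸ hD)
  rcases hadj with ⟨j, hj₁, hj, rfl⟩ | ⟨y, hy, rfl⟩
  · have hjl : j < (a :: t).length := hu.1 ▸ hj
    rw [List.headI_cons, List.headI_cons, List.getD_eq_getElem _ _ hjl]
    intro h
    have := (hu.2.1.getElem_inj_iff (i := j) (j := 0) (hj := by simp)).1 h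
    omega
  · rw [List.headI_cons, List.headI_cons]
    rintro rfl
    exact hy List.mem_cons_self

theorem exists_adjR_headI_eq (hu : IsVtx Δ D u) (hD : 1 ≤ D) {z : ℕ}
    (hz : z ∈ (Finset.Icc 1 (Δ + 1)).erase u.headI) : ∃ v, adjR Δ D 0 u v ∧ v.headI = z := by
  obtain ⟨hzu, hz⟩ := Finset.mem_erase.1 hz
  by_cases hmem : z ∈ u
  · have hj : u.idxOf z < u.length := List.idxOf_lt_length_iff.2 hmem
    have hget : u[u.idxOf z] = z := List.getElem_idxOf hj
    have hj₀ : u.idxOf z ≠ 0 := by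
      obtain ⟨a, t, rfl⟩ := List.exists_cons_of_length_pos (hu.1 ▸ hD)
      intro h
      simp only [h] at hget
      exact hzu hget.symm
    refine ⟨_, ⟨hu, hu.rotate hj, Or.inl ⟨u.idxOf z, by omega, hu.1 ▸ hj, ?_⟩⟩, hget⟩
    rw [List.getD_eq_getElem _ _ hj]
  · obtain ⟨hz₁, hzΔ⟩ := Finset.mem_Icc.1 hz
    exact ⟨_, ⟨hu, hu.shift hD hmem hz₁ hzΔ, Or.inr ⟨z, hmem, rfl⟩⟩, rfl⟩

theorem bijOn_headI_adjR (hu : IsVtx Δ D u) (hD : 1 ≤ D) :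
    Set.BijOn List.headI {v | adjR Δ D 0 u v} ((Finset.Icc 1 (Δ + 1)).erase u.headI) :=
  ⟨fun _ hv => adjR_headI_mem hv, adjR_headI_injOn 0,
    fun _ hz => exists_adjR_headI_eq hu hD hz⟩

end OutNeighbors

theorem out_neighbors_bijection_general (Δ D : ℕ) (hD : 1 ≤ D)
    (u : List ℕ) (hu : IsVtx Δ D u) :
    (∀ v w, adjR Δ D 0 u v → adjR Δ D 0 u w → v.headI = w.headI → v = w) ∧
    (∀ z, (1 ≤ z ∧ z ≤ Δ + 1 ∧ z ≠ u.headI) ↔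
      ∃ v, adjR Δ D 0 u v ∧ v.headI = z) ∧
    {v | adjR Δ D 0 u v}.ncard = Δ := by
  have hbij := bijOn_headI_adjR hu hD
  refine ⟨fun v w hv hw => hbij.injOn hv hw, fun z => ?_, ?_⟩
  · calc (1 ≤ z ∧ z ≤ Δ + 1 ∧ z ≠ u.headI)
        ↔ z ∈ (↑((Finset.Icc 1 (Δ + 1)).erase u.headI) : Set ℕ) := by
          simp only [Finset.coe_erase, Finset.coe_Icc, Set.mem_sdiff, Set.mem_Icc,
            Set.mem_singleton_iff, and_assoc]
      _ ↔ ∃ v, adjR Δ D 0 u v ∧ v.headI = z := by rw [← hbij.image_eq]; rfl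
  · rw [hbij.ncard_eq, Set.ncard_coe_finset,
      Finset.card_erase_of_mem (hu.headI_mem_alphabet hD), Nat.card_Icc]
    omega

/-- in `Γ_Δ(D)`, an out-neighbor of `u` is uniquely determined by
its first letter; the map sending each out-neighbor to its first letter is a
bijection onto `{1, …, Δ+1} \ {u_1}`; and `Γ_Δ(D)` is `Δ`-regular. -/
theorem out_neighbors_bijection (Δ D : ℕ) (hD : 1 ≤ D) (hΔ : D ≤ Δ)
    (u : List ℕ) (hu : IsVtx Δ D u) :
    (∀ v w, adjR Δ D 0 u v → adjR Δ D 0 u w → v.headI = w.headI → v = w) ∧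
    (∀ z, (1 ≤ z ∧ z ≤ Δ + 1 ∧ z ≠ u.headI) ↔
      ∃ v, adjR Δ D 0 u v ∧ v.headI = z) ∧
    {v | adjR Δ D 0 u v}.ncard = Δ :=
  out_neighbors_bijection_general Δ D hD u hu
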